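/- Let X be countably infinite. Every ideal clone on X is contained in a precomplete clone. Moreover, every precomplete clone containing an ideal clone is itself an ideal clone: if C is a precomplete clone and C_I ⊆ C for some ideal I in our sense, then C = C_J for some ideal J in our sense. -/

import Mathlib

/-- The set of all finitary operations on `X`: an element of arity index `n`
is an `(n+1)`-ary operation, so that all arities are `≥ 1`. -/
abbrev Ops (X : Type) : Type := Σ n : ℕ, (Fin (n + 1) → X) → X

/-- `opImage f A` is the image `f[A^n]` of the `n`-th power of `A` under the
`n`-ary operation `f`. -/
def opImage {X : Type} (f : Ops X) (A : Set X) : Set X :=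
  f.2 '' {x | ∀ i, x i ∈ A}

/-- An ideal "in our sense": closed under subsets and finite unions, contains all
finite sets, contains at least one infinite set, and does not contain `X`. -/
def IsIdealInOurSense {X : Type} (I : Set (Set X)) : Prop :=
  (∀ A ∈ I, ∀ B ⊆ A, B ∈ I) ∧
  (∀ A ∈ I, ∀ B ∈ I, A ∪ B ∈ I) ∧
  (∀ A : Set X, A.Finite → A ∈ I) ∧
  (∃ A ∈ I, A.Infinite) ∧
  (Set.univ : Set X) ∉ I

/-- The clone `C_I` induced by a collection of sets `I`: all operations mapping
powers of `I`-sets into `I`. -/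
def idealClone {X : Type} (I : Set (Set X)) : Set (Ops X) :=
  {f | ∀ A ∈ I, opImage f A ∈ I}

/-- The unary part `C_I^{(1)}` of the clone induced by `I`. -/
def unaryPart {X : Type} (I : Set (Set X)) : Set (X → X) :=
  {f | ∀ A ∈ I, f '' A ∈ I}

/-- A clone: a set of finitary operations containing all projections and closed
under composition. -/
def IsClone {X : Type} (C : Set (Ops X)) : Prop :=
  (∀ (n : ℕ) (i : Fin (n + 1)), (⟨n, fun x => x i⟩ : Ops X) ∈ C) ∧
  ∀ (n m : ℕ) (f : (Fin (n + 1) → X) → X) (g : Fin (n + 1) → (Fin (m + 1) → X) → X),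
    (⟨n, f⟩ : Ops X) ∈ C → (∀ i, (⟨m, g i⟩ : Ops X) ∈ C) →
    (⟨m, fun x => f fun i => g i x⟩ : Ops X) ∈ C

/-- The clone generated by a set of operations. -/
def cloneGen {X : Type} (F : Set (Ops X)) : Set (Ops X) :=
  ⋂₀ {C : Set (Ops X) | IsClone C ∧ F ⊆ C}

/-- A precomplete clone: a proper clone whose only proper cover is the full clone `O`. -/
def IsPrecompleteClone {X : Type} (C : Set (Ops X)) : Prop :=
  IsClone C ∧ C ≠ Set.univ ∧
  ∀ D : Set (Ops X), IsClone D → C ⊂ D → D = Set.univ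

/-- The regularization `Î` of `I`: all sets `A` such that every infinite subset
of `A` contains an infinite member of `I`. -/
def regularization {X : Type} (I : Set (Set X)) : Set (Set X) :=
  {A | ∀ B ⊆ A, B.Infinite → ∃ C ⊆ B, C.Infinite ∧ C ∈ I}

/-!
An operation `f ∈ C` with `f[A^n] = X` for some `A ∈ I` forces a clone `C ⊇ C_I` to be
everything: every `h` factors as `f ∘ (t ∘ h)` where `t` picks `f`-preimages in `A^n`, and the
coordinates of `t ∘ h` take values in `A`, so they lie in `C_I`. Hence, for a proper clone
`C ⊇ C_I`, the sets covered by some `f[A^n]` with `f ∈ C`, `A ∈ I` form an ideal `J ⊇ I` with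
`C ⊆ C_J`; closure under unions uses the selector `if z = a then x else y`, which lies in
every ideal clone. A precomplete `C ⊇ C_I` therefore equals the proper clone `C_J`, and a
Zorn-maximal ideal `J` with `C_I ⊆ C_J` has a precomplete ideal clone `C_J`.
-/

open Function

section

variable {X : Type}

lemma extend_const_mem {α β γ : Type*} {e : α → β} {y : α → γ} {c : γ} {A : Set γ}
    (hy : ∀ a, y a ∈ A) (hc : c ∈ A) (b : β) : extend e y (fun _ => c) b ∈ A := by
  classical
  rw [extend_def]
  split_ifs
  exacts [hy _, hc]

lemma opImage_mono {f : Ops X} {A B : Set X} (hAB : A ⊆ B) : opImage f A ⊆ opImage f B := by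
  rintro _ ⟨x, hx, rfl⟩
  exact ⟨x, fun i => hAB (hx i), rfl⟩

lemma opImage_unary (σ : X → X) (A : Set X) :
    opImage ⟨0, fun v => σ (v 0)⟩ A = σ '' A := by
  ext s
  constructor
  · rintro ⟨x, hx, rfl⟩
    exact ⟨x 0, hx 0, rfl⟩
  · rintro ⟨a, ha, rfl⟩
    exact ⟨fun _ => a, fun _ => ha, rfl⟩

lemma exists_reindex_preimage {n N : ℕ} {f : (Fin (n + 1) → X) → X}
    {e : Fin (n + 1) → Fin (N + 1)} (he : Injective e) {A : Set X} {c : X} (hc : c ∈ A)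
    {s : X} (hs : s ∈ opImage ⟨n, f⟩ A) :
    ∃ x : Fin (N + 1) → X, (∀ k, x k ∈ A) ∧ (∀ k ∉ Set.range e, x k = c) ∧ f (x ∘ e) = s := by
  obtain ⟨y, hy, rfl⟩ := hs
  refine ⟨extend e y (fun _ => c), extend_const_mem hy hc, fun k hk => extend_apply' _ _ _ hk, ?_⟩
  congr 1
  funext i
  exact he.extend_apply _ _ i

lemma exists_image_eq_univ [Countable X] [Infinite X] {A : Set X} (hA : A.Infinite) :
    ∃ σ : X → X, σ '' A = Set.univ := by
  have := hA.to_subtype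
  obtain ⟨φ⟩ : Nonempty (A ≃ X) := nonempty_equiv_of_countable
  refine ⟨extend Subtype.val φ id, Set.eq_univ_of_forall fun x => ⟨φ.symm x, (φ.symm x).2, ?_⟩⟩
  rw [Subtype.val_injective.extend_apply, Equiv.apply_symm_apply]

namespace IsIdealInOurSense

variable {I : Set (Set X)}

lemma mem_of_subset (hI : IsIdealInOurSense I) {A B : Set X} (hA : A ∈ I) (hBA : B ⊆ A) :
    B ∈ I :=
  hI.1 A hA B hBA

lemma union_mem (hI : IsIdealInOurSense I) {A B : Set X} (hA : A ∈ I) (hB : B ∈ I) :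
    A ∪ B ∈ I :=
  hI.2.1 A hA B hB

lemma finite_mem (hI : IsIdealInOurSense I) {A : Set X} (hA : A.Finite) : A ∈ I :=
  hI.2.2.1 A hA

lemma univ_notMem (hI : IsIdealInOurSense I) : Set.univ ∉ I :=
  hI.2.2.2.2

lemma iUnion_mem (hI : IsIdealInOurSense I) {ι : Type*} [Finite ι] {T : ι → Set X}
    (hT : ∀ i, T i ∈ I) : ⋃ i, T i ∈ I := by
  classical
  cases nonempty_fintype ι
  have key : ∀ s : Finset ι, ⋃ i ∈ s, T i ∈ I := by
    intro s
    induction s using Finset.induction_on with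
    | empty => simpa using hI.finite_mem Set.finite_empty
    | insert i s _ ih =>
      rw [Finset.set_biUnion_insert]
      exact hI.union_mem (hT i) ih
  simpa using key Finset.univ

lemma sUnion_of_isChain {c : Set (Set (Set X))} (hc : ∀ J ∈ c, IsIdealInOurSense J)
    (hchain : IsChain (· ⊆ ·) c) (hne : c.Nonempty) : IsIdealInOurSense (⋃₀ c) := by
  obtain ⟨J₀, hJ₀⟩ := hne
  refine ⟨?_, ?_, fun A hA => ⟨J₀, hJ₀, (hc J₀ hJ₀).finite_mem hA⟩, ?_, ?_⟩
  · rintro A ⟨J, hJ, hAJ⟩ B hBA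
    exact ⟨J, hJ, (hc J hJ).mem_of_subset hAJ hBA⟩
  · rintro A ⟨J₁, hJ₁, hA⟩ B ⟨J₂, hJ₂, hB⟩
    rcases hchain.total hJ₁ hJ₂ with h | h
    · exact ⟨J₂, hJ₂, (hc J₂ hJ₂).union_mem (h hA) hB⟩
    · exact ⟨J₁, hJ₁, (hc J₁ hJ₁).union_mem hA (h hB)⟩
  · obtain ⟨A, hA, hAinf⟩ := (hc J₀ hJ₀).2.2.2.1
    exact ⟨A, ⟨J₀, hJ₀, hA⟩, hAinf⟩
  · rintro ⟨J, hJ, huniv⟩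
    exact (hc J hJ).univ_notMem huniv

end IsIdealInOurSense

namespace IsClone

variable {C : Set (Ops X)}

lemma proj_mem (hC : IsClone C) (n : ℕ) (i : Fin (n + 1)) :
    (⟨n, fun x => x i⟩ : Ops X) ∈ C :=
  hC.1 n i

lemma comp_mem (hC : IsClone C) {n m : ℕ} {f : (Fin (n + 1) → X) → X}
    {g : Fin (n + 1) → (Fin (m + 1) → X) → X} (hf : (⟨n, f⟩ : Ops X) ∈ C)
    (hg : ∀ i, (⟨m, g i⟩ : Ops X) ∈ C) : (⟨m, fun x => f fun i => g i x⟩ : Ops X) ∈ C :=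
  hC.2 n m f g hf hg

lemma reindex_mem (hC : IsClone C) {n N : ℕ} {f : (Fin (n + 1) → X) → X}
    (hf : (⟨n, f⟩ : Ops X) ∈ C) (e : Fin (n + 1) → Fin (N + 1)) :
    (⟨N, fun x => f (x ∘ e)⟩ : Ops X) ∈ C :=
  hC.comp_mem hf fun i => hC.proj_mem N (e i)

end IsClone

section IdealClone

variable {I : Set (Set X)}

lemma mem_idealClone_of_forall_mem (hI : IsIdealInOurSense I) {A : Set X} (hA : A ∈ I)
    {n : ℕ} {f : (Fin (n + 1) → X) → X} (hf : ∀ x, f x ∈ A) :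
    (⟨n, f⟩ : Ops X) ∈ idealClone I := by
  intro S _
  refine hI.mem_of_subset hA ?_
  rintro _ ⟨x, _, rfl⟩
  exact hf x

lemma mem_idealClone_of_forall_exists_eq (hI : IsIdealInOurSense I) {n : ℕ}
    {f : (Fin (n + 1) → X) → X} (hf : ∀ x, ∃ i, f x = x i) :
    (⟨n, f⟩ : Ops X) ∈ idealClone I := by
  intro A hA
  refine hI.mem_of_subset hA ?_
  rintro _ ⟨x, hx, rfl⟩
  obtain ⟨i, hi⟩ := hf x
  show f x ∈ A
  rw [hi]
  exact hx i

lemma isClone_idealClone (hI : IsIdealInOurSense I) : IsClone (idealClone I) := by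
  refine ⟨fun n i => mem_idealClone_of_forall_exists_eq hI fun x => ⟨i, rfl⟩, ?_⟩
  intro n m f g hf hg A hA
  refine hI.mem_of_subset (hf _ (hI.iUnion_mem fun i => hg i A hA)) ?_
  rintro _ ⟨x, hx, rfl⟩
  exact ⟨fun i => g i x, fun i => Set.mem_iUnion.mpr ⟨i, x, hx, rfl⟩, rfl⟩

lemma idealClone_ne_univ [Countable X] [Infinite X] (hI : IsIdealInOurSense I) :
    idealClone I ≠ Set.univ := by
  intro h
  obtain ⟨A, hA, hAinf⟩ := hI.2.2.2.1
  obtain ⟨σ, hσ⟩ := exists_image_eq_univ hAinf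
  have hmem : (⟨0, fun v => σ (v 0)⟩ : Ops X) ∈ idealClone I := h ▸ Set.mem_univ _
  have := hmem A hA
  rw [opImage_unary, hσ] at this
  exact hI.univ_notMem this

lemma mem_idealClone_sUnion {c : Set (Set (Set X))} {f : Ops X}
    (hf : ∀ J ∈ c, f ∈ idealClone J) : f ∈ idealClone (⋃₀ c) := by
  rintro A ⟨J, hJ, hA⟩
  exact ⟨J, hJ, hf J hJ A hA⟩

end IdealClone

def imageIdeal (C : Set (Ops X)) (I : Set (Set X)) : Set (Set X) :=
  {S | ∃ f ∈ C, ∃ A ∈ I, S ⊆ opImage f A}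

section ImageIdeal

variable {C : Set (Ops X)} {I : Set (Set X)}

lemma IsClone.eq_univ_of_univ_subset_opImage (hC : IsClone C) (hI : IsIdealInOurSense I)
    (hIC : idealClone I ⊆ C) {n : ℕ} {f : (Fin (n + 1) → X) → X} (hf : (⟨n, f⟩ : Ops X) ∈ C)
    {A : Set X} (hA : A ∈ I) (hcov : Set.univ ⊆ opImage ⟨n, f⟩ A) : C = Set.univ := by
  refine Set.eq_univ_of_forall fun ⟨m, h⟩ => ?_
  choose t htA hft using fun x : X => hcov (Set.mem_univ x)
  have hth : ∀ i, (⟨m, fun x => t (h x) i⟩ : Ops X) ∈ C :=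
    fun i => hIC (mem_idealClone_of_forall_mem hI hA fun x => htA (h x) i)
  have hfth : (fun x => f fun i => t (h x) i) = h := funext fun x => hft (h x)
  simpa only [hfth] using hC.comp_mem hf hth

lemma subset_imageIdeal (hC : IsClone C) : I ⊆ imageIdeal C I := by
  intro A hA
  exact ⟨_, hC.proj_mem 0 0, A, hA, fun a ha => ⟨fun _ => a, fun _ => ha, rfl⟩⟩

lemma union_mem_imageIdeal [Nontrivial X] (hI : IsIdealInOurSense I) (hC : IsClone C)
    (hIC : idealClone I ⊆ C) {S T : Set X} (hS : S ∈ imageIdeal C I)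
    (hT : T ∈ imageIdeal C I) : S ∪ T ∈ imageIdeal C I := by
  obtain ⟨⟨n, f⟩, hf, A, hA, hSA⟩ := hS
  obtain ⟨⟨m, g⟩, hg, B, hB, hTB⟩ := hT
  classical
  obtain ⟨a, b, hab⟩ := exists_pair_ne X
  let e₁ : Fin (n + 1) → Fin (n + m + 2) := fun i => (Fin.castLE (by omega) i).succ
  let e₂ : Fin (m + 1) → Fin (n + m + 2) := fun j => (Fin.castLE (by omega) j).succ
  have he₁ : Injective e₁ := (Fin.succ_injective _).comp (Fin.castLE_injective _)
  have he₂ : Injective e₂ := (Fin.succ_injective _).comp (Fin.castLE_injective _)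
  have hsel : (⟨2, fun v : Fin 3 → X => if v 0 = a then v 1 else v 2⟩ : Ops X) ∈ C :=
    hIC (mem_idealClone_of_forall_exists_eq hI fun v => by split_ifs; exacts [⟨1, rfl⟩, ⟨2, rfl⟩])
  have hH : (⟨n + m + 1, fun x => if x 0 = a then f (x ∘ e₁) else g (x ∘ e₂)⟩ : Ops X) ∈ C := by
    refine hC.comp_mem (g := ![fun x => x 0, fun x => f (x ∘ e₁), fun x => g (x ∘ e₂)]) hsel ?_
    intro i
    fin_cases i
    exacts [hC.proj_mem _ 0, hC.reindex_mem hf e₁, hC.reindex_mem hg e₂]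
  let K : Set X := {a, b} ∪ (A ∪ B)
  have hK : K ∈ I := hI.union_mem (hI.finite_mem (by simp)) (hI.union_mem hA hB)
  have hAK : A ⊆ K := fun x hx => Or.inr (Or.inl hx)
  have hBK : B ⊆ K := fun x hx => Or.inr (Or.inr hx)
  have haK : a ∈ K := Or.inl (Or.inl rfl)
  have hbK : b ∈ K := Or.inl (Or.inr rfl)
  refine ⟨_, hH, K, hK, ?_⟩
  rintro s (hs | hs)
  · obtain ⟨x, hxK, hx0, rfl⟩ := exists_reindex_preimage he₁ haK (opImage_mono hAK (hSA hs))
    have hxa : x 0 = a := hx0 0 fun ⟨i, hi⟩ => Fin.succ_ne_zero _ hi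
    exact ⟨x, hxK, if_pos hxa⟩
  · obtain ⟨x, hxK, hx0, rfl⟩ := exists_reindex_preimage he₂ hbK (opImage_mono hBK (hTB hs))
    have hxa : x 0 ≠ a := (hx0 0 fun ⟨i, hi⟩ => Fin.succ_ne_zero _ hi).trans_ne hab.symm
    exact ⟨x, hxK, if_neg hxa⟩

lemma isIdeal_imageIdeal [Nontrivial X] (hI : IsIdealInOurSense I) (hC : IsClone C)
    (hIC : idealClone I ⊆ C) (hCne : C ≠ Set.univ) : IsIdealInOurSense (imageIdeal C I) := by
  refine ⟨?_, fun S hS T hT => union_mem_imageIdeal hI hC hIC hS hT,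
    fun A hA => subset_imageIdeal hC (hI.finite_mem hA), ?_, ?_⟩
  · rintro S ⟨f, hf, A, hA, hSA⟩ T hTS
    exact ⟨f, hf, A, hA, hTS.trans hSA⟩
  · obtain ⟨A, hA, hAinf⟩ := hI.2.2.2.1
    exact ⟨A, subset_imageIdeal hC hA, hAinf⟩
  · rintro ⟨⟨n, f⟩, hf, A, hA, hcov⟩
    exact hCne (hC.eq_univ_of_univ_subset_opImage hI hIC hf hA hcov)

lemma subset_idealClone_imageIdeal (hC : IsClone C) : C ⊆ idealClone (imageIdeal C I) := by
  rintro ⟨n, f⟩ hf S ⟨⟨m, g⟩, hg, A, hA, hSA⟩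
  let e : Fin (n + 1) × Fin (m + 1) → Fin ((n + 1) * (m + 1) + 1) :=
    fun p => (finProdFinEquiv p).castSucc
  have he : Injective e := (Fin.castSucc_injective _).comp finProdFinEquiv.injective
  have hH : (⟨_, fun x => f fun i => g fun j => x (e (i, j))⟩ : Ops X) ∈ C :=
    hC.comp_mem hf fun i => hC.reindex_mem hg fun j => e (i, j)
  refine ⟨_, hH, A, hA, ?_⟩
  rintro _ ⟨y, hy, rfl⟩
  choose w hwA hwy using fun i => hSA (hy i)
  refine ⟨extend e (uncurry w) (fun _ => w 0 0), extend_const_mem (fun p => hwA _ _) (hwA 0 0), ?_⟩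
  simp only [he.extend_apply, uncurry_apply_pair]
  exact congrArg f (funext hwy)

end ImageIdeal

lemma IsPrecompleteClone.eq_idealClone_imageIdeal [Countable X] [Infinite X] {C : Set (Ops X)}
    {I : Set (Set X)} (hC : IsPrecompleteClone C) (hI : IsIdealInOurSense I)
    (hIC : idealClone I ⊆ C) : C = idealClone (imageIdeal C I) := by
  have hJ := isIdeal_imageIdeal hI hC.1 hIC hC.2.1
  refine (subset_idealClone_imageIdeal hC.1).eq_or_ssubset.resolve_right fun hss => ?_
  exact idealClone_ne_univ hJ (hC.2.2 _ (isClone_idealClone hJ) hss)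

lemma isPrecompleteClone_idealClone_of_maximal [Countable X] [Infinite X] {J : Set (Set X)}
    (hJ : IsIdealInOurSense J)
    (hmax : ∀ J', IsIdealInOurSense J' → idealClone J ⊆ idealClone J' → J ⊆ J' → J = J') :
    IsPrecompleteClone (idealClone J) := by
  refine ⟨isClone_idealClone hJ, idealClone_ne_univ hJ, fun D hD hJD => ?_⟩
  by_contra hDne
  have hDJ' : D ⊆ idealClone (imageIdeal D J) := subset_idealClone_imageIdeal hD
  have hJJ' := hmax _ (isIdeal_imageIdeal hJ hD hJD.subset hDne) (hJD.subset.trans hDJ')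
    (subset_imageIdeal hD)
  exact hJD.not_subset (hJJ' ▸ hDJ')

end

/-- Every ideal clone is contained in a precomplete clone, and every precomplete
clone containing an ideal clone is itself an ideal clone. -/
theorem stmt7 {X : Type} [Countable X] [Infinite X] :
    (∀ I : Set (Set X), IsIdealInOurSense I →
      ∃ C : Set (Ops X), IsPrecompleteClone C ∧ idealClone I ⊆ C) ∧
    (∀ C : Set (Ops X), IsPrecompleteClone C →
      (∃ I : Set (Set X), IsIdealInOurSense I ∧ idealClone I ⊆ C) →
      ∃ J : Set (Set X), IsIdealInOurSense J ∧ C = idealClone J) := by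
  refine ⟨fun I hI => ?_, fun C hC ⟨I, hI, hIC⟩ =>
    ⟨_, isIdeal_imageIdeal hI hC.1 hIC hC.2.1, hC.eq_idealClone_imageIdeal hI hIC⟩⟩
  let P : Set (Set (Set X)) := {J | IsIdealInOurSense J ∧ idealClone I ⊆ idealClone J}
  have hchain : ∀ c ⊆ P, IsChain (· ⊆ ·) c → c.Nonempty → ∃ ub ∈ P, ∀ J ∈ c, J ⊆ ub :=
    fun c hcP hc hne =>
      ⟨⋃₀ c, ⟨IsIdealInOurSense.sUnion_of_isChain (fun J hJ => (hcP hJ).1) hc hne,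
        fun _ hf => mem_idealClone_sUnion fun J hJ => (hcP hJ).2 hf⟩,
        fun _ => Set.subset_sUnion_of_mem⟩
  obtain ⟨J, -, hJ⟩ := zorn_subset_nonempty P hchain I ⟨hI, subset_rfl⟩
  refine ⟨_, isPrecompleteClone_idealClone_of_maximal hJ.prop.1 fun J' hJ' hJJ' hsub => ?_,
    hJ.prop.2⟩
  exact hJ.eq_of_subset ⟨hJ', hJ.prop.2.trans hJJ'⟩ hsub
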